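/- Hadamard's determinant inequality: for any real n×n matrix A with columns a₁,…,aₙ, |det A| ≤ ∏ᵢ ‖aᵢ‖₂, with equality when the columns are pairwise orthogonal. -/

import Mathlib

/-!
Take the columns `v i` as vectors of Euclidean space and Gram–Schmidt them into an orthonormal
basis `b`. In that basis the family `v` is triangular with diagonal entries `⟪b i, v i⟫`, so up to
sign the determinant is `∏ i, ⟪b i, v i⟫`, and Cauchy–Schwarz bounds each factor by `‖v i‖`. When
the `v i` are pairwise orthogonal and nonzero, `b i = v i / ‖v i‖` and every factor is exactly
`‖v i‖`.
-/

open Matrix BigOperators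

/-- Euclidean norm of a vector. -/
noncomputable def euclNorm {k : ℕ} (v : Fin k → ℝ) : ℝ :=
  Real.sqrt (∑ i, v i ^ 2)

open scoped RealInnerProductSpace

namespace OrthonormalBasis

variable {E : Type*} [NormedAddCommGroup E] [InnerProductSpace ℝ E] {n : ℕ}
  (b : OrthonormalBasis (Fin n) ℝ E)

theorem abs_det_le_prod_norm (v : Fin n → E) : |b.toBasis.det v| ≤ ∏ i, ‖v i‖ := by
  have : Fact (Module.finrank ℝ E = n) := ⟨by simpa using Module.finrank_eq_card_basis b.toBasis⟩
  rw [← b.toBasis.orientation.volumeForm_robust' b]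
  exact b.toBasis.orientation.abs_volumeForm_apply_le v

theorem abs_det_eq_prod_norm_of_pairwise_orthogonal {v : Fin n → E}
    (hv : Pairwise fun i j => ⟪v i, v j⟫ = 0) : |b.toBasis.det v| = ∏ i, ‖v i‖ := by
  have : Fact (Module.finrank ℝ E = n) := ⟨by simpa using Module.finrank_eq_card_basis b.toBasis⟩
  rw [← b.toBasis.orientation.volumeForm_robust' b]
  exact b.toBasis.orientation.abs_volumeForm_apply_of_pairwise_orthogonal hv

end OrthonormalBasis

theorem Matrix.basisFun_det_toLp_col {ι : Type*} [Fintype ι] [DecidableEq ι]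
    (A : Matrix ι ι ℝ) :
    (EuclideanSpace.basisFun ι ℝ).toBasis.det (fun i => WithLp.toLp 2 (fun k => A k i)) =
      A.det := by
  rw [Module.Basis.det_apply]
  rfl

theorem euclNorm_eq_norm_toLp {k : ℕ} (v : Fin k → ℝ) : euclNorm v = ‖WithLp.toLp 2 v‖ := by
  simp [euclNorm, EuclideanSpace.norm_eq]

/-- Hadamard's determinant inequality, with equality for pairwise orthogonal columns. -/
theorem hadamard_inequality {n : ℕ} (A : Matrix (Fin n) (Fin n) ℝ) :
    |A.det| ≤ ∏ i, euclNorm (fun k => A k i) ∧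
      ((∀ i j, i ≠ j → ∑ k, A k i * A k j = 0) →
        |A.det| = ∏ i, euclNorm (fun k => A k i)) := by
  set b := EuclideanSpace.basisFun (Fin n) ℝ
  set cols : Fin n → EuclideanSpace ℝ (Fin n) := fun i => WithLp.toLp 2 (fun k => A k i)
  simp only [euclNorm_eq_norm_toLp, ← A.basisFun_det_toLp_col]
  refine ⟨b.abs_det_le_prod_norm cols, fun horth => ?_⟩
  refine b.abs_det_eq_prod_norm_of_pairwise_orthogonal fun i j hij => ?_
  simpa [cols, PiLp.inner_apply, mul_comm] using horth i j hij
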